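/- If ‖R^∨_{A_n}‖_∞ → 0 and ‖R_{A_n}‖₁ = O(1) as n → ∞, then the sequence R_{A_n} belongs to the class 𝓜ᵐ; that is, the solutions Z_n of the Cauchy problems Z_n' + R_{A_n} Z_n = 0, Z_n(a) = I_m converge to the identity matrix uniformly on [a,b]. -/

import Mathlib

open MeasureTheory Filter Topology Set

attribute [local instance] Matrix.normedAddCommGroup Matrix.normedSpace

/-- The `ContinuousENorm` structure coming from the local normed group structure on matrices
(added in the port: the newer Mathlib no longer finds it from `Matrix.normedAddCommGroup`). -/
noncomputable def matrixContinuousENorm (ι : Type*) [Fintype ι] :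
    ContinuousENorm (Matrix ι ι ℂ) :=
  SeminormedAddGroup.toContinuousENorm

attribute [local instance] matrixContinuousENorm

/-- The sup-norm of a function over the interval `[a, b]`. -/
noncomputable def supIcc {E : Type*} [NormedAddCommGroup E] (a b : ℝ) (g : ℝ → E) : ℝ :=
  ⨆ t ∈ Set.Icc a b, ‖g t‖

/-- Application of a continuous linear boundary operator
`B : C([a,b]; E) → F` to a function `y : ℝ → E` that is continuous on `[a,b]`
(junk value `0` otherwise). -/
noncomputable def applyBC {E F : Type*} [NormedAddCommGroup E] [NormedSpace ℂ E]
    [NormedAddCommGroup F] [NormedSpace ℂ F] (a b : ℝ)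
    (B : C(Set.Icc a b, E) →L[ℂ] F) (y : ℝ → E) : F :=
  letI := Classical.propDecidable (ContinuousOn y (Set.Icc a b))
  if hy : ContinuousOn y (Set.Icc a b) then B ⟨(Set.Icc a b).restrict y, hy.restrict⟩ else 0

/-- `y` is a solution of the system `y' + A y = f` on `[a, b]`: it is (absolutely)
continuous on `[a,b]` and satisfies the equivalent integral equation, i.e. the
differential equation holds almost everywhere. -/
def IsSolution (a b : ℝ) {m : ℕ} (A : ℝ → Matrix (Fin m) (Fin m) ℂ)
    (f : ℝ → (Fin m → ℂ)) (y : ℝ → (Fin m → ℂ)) : Prop :=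
  ContinuousOn y (Set.Icc a b) ∧
  IntegrableOn (fun s => f s - (A s).mulVec (y s)) (Set.Icc a b) ∧
  ∀ t ∈ Set.Icc a b, y t = y a + ∫ s in a..t, (f s - (A s).mulVec (y s))

/-- The class `𝓜(a,b;ι)` of sequences of integrable matrix functions `R n` such that the
solution `Z n` of the Cauchy problem `Z' + R Z = 0`, `Z(a) = I` tends to the identity
matrix uniformly on `[a, b]`. -/
def MemMClass (a b : ℝ) (ι : Type*) [Fintype ι] [DecidableEq ι]
    (R : ℕ → ℝ → Matrix ι ι ℂ) : Prop :=
  ∃ Z : ℕ → ℝ → Matrix ι ι ℂ,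
    (∀ n, ContinuousOn (Z n) (Set.Icc a b)) ∧
    (∀ n, IntegrableOn (fun s => R n s * Z n s) (Set.Icc a b)) ∧
    (∀ n, ∀ t ∈ Set.Icc a b, Z n t = 1 - ∫ s in a..t, R n s * Z n s) ∧
    Tendsto (fun n => supIcc a b (fun t => Z n t - 1)) atTop (𝓝 0)

/-!
The solution is the Picard series `Z = ∑ Pₖ`, `P₀ = 1`, `Pₖ₊₁(t) = -∫ₐᵗ R Pₖ`. The first iterate
is exactly `-R^∨`, so `‖P₁‖ ≤ ε := ‖R^∨‖_∞`, and every further iteration costs at most a factor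
`m ∫ₐᵗ ‖R‖` (the entrywise sup norm satisfies `‖XY‖ ≤ m ‖X‖ ‖Y‖`) together with a factorial:
`‖Pₖ₊₁(t)‖ ≤ ε (m ‖R‖₁)ᵏ / k!`. Hence `‖Z - 1‖_∞ ≤ ε exp (m ‖R‖₁)`, which tends to `0` when
`ε → 0` and `‖R‖₁` stays bounded.
-/

open scoped Interval Nat

section SupIcc

variable {E : Type*} [NormedAddCommGroup E] {a b : ℝ} {g : ℝ → E}

lemma supIcc_nonneg (a b : ℝ) (g : ℝ → E) : 0 ≤ supIcc a b g :=
  Real.iSup_nonneg fun _ => Real.iSup_nonneg fun _ => norm_nonneg _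

lemma supIcc_le {c : ℝ} (hc : 0 ≤ c) (h : ∀ t ∈ Icc a b, ‖g t‖ ≤ c) : supIcc a b g ≤ c :=
  Real.iSup_le (fun t => Real.iSup_le (h t) hc) hc

lemma norm_le_supIcc (hg : ContinuousOn g (Icc a b)) {t : ℝ} (ht : t ∈ Icc a b) :
    ‖g t‖ ≤ supIcc a b g := by
  obtain ⟨M, hM⟩ := isCompact_Icc.exists_bound_of_continuousOn hg
  refine le_ciSup₂ (f := fun t (_ : t ∈ Icc a b) => ‖g t‖) ⟨max M 0, ?_⟩ t ht
  rintro _ ⟨_, ⟨s, rfl⟩, ⟨hs, rfl⟩⟩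
  exact le_max_of_le_left (hM s hs)

end SupIcc

lemma continuousOn_intervalIntegral_Icc {E : Type*} [NormedAddCommGroup E] [NormedSpace ℝ E]
    {a b : ℝ} {f : ℝ → E} (hf : IntegrableOn f (Icc a b)) :
    ContinuousOn (fun t => ∫ s in a..t, f s) (Icc a b) := by
  rcases le_or_gt a b with hab | hab
  · have := intervalIntegral.continuousOn_primitive_interval (f := f) (by rwa [uIcc_of_le hab])
    rwa [uIcc_of_le hab] at this
  · simp [Icc_eq_empty_of_lt hab]

lemma intervalIntegral_norm_le_setIntegral_Icc {E : Type*} [NormedAddCommGroup E] {a b t : ℝ}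
    {f : ℝ → E} (hf : IntegrableOn f (Icc a b)) (ht : t ∈ Icc a b) :
    ∫ s in a..t, ‖f s‖ ≤ ∫ s in Icc a b, ‖f s‖ := by
  rw [intervalIntegral.integral_of_le ht.1]
  exact setIntegral_mono_set hf.norm (Eventually.of_forall fun _ => norm_nonneg _)
    (Ioc_subset_Icc_self.trans (Icc_subset_Icc_right ht.2)).eventuallyLE

theorem AbsolutelyContinuousOnInterval.fun_pow {f : ℝ → ℝ} {a b : ℝ}
    (hf : AbsolutelyContinuousOnInterval f a b) (k : ℕ) :
    AbsolutelyContinuousOnInterval (fun x => f x ^ k) a b := by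
  induction k with
  | zero => simpa using (LipschitzWith.const (1 : ℝ)).lipschitzOnWith.absolutelyContinuousOnInterval
  | succ k ih => simpa only [pow_succ] using ih.fun_mul hf

/-- `f` need not be continuous: this is the fundamental theorem of calculus for the absolutely
continuous function `(∫ u in a..s, f u) ^ (k + 1)`. -/
theorem integral_mul_primitive_pow {f : ℝ → ℝ} {a t : ℝ} (hf : IntervalIntegrable f volume a t)
    (k : ℕ) :
    ∫ s in a..t, f s * (∫ u in a..s, f u) ^ k = (∫ u in a..t, f u) ^ (k + 1) / (k + 1) := by
  have hftc := ((hf.absolutelyContinuousOnInterval_intervalIntegral left_mem_uIcc).fun_pow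
    (k + 1)).integral_deriv_eq_sub
  rw [intervalIntegral.integral_same, zero_pow k.succ_ne_zero, sub_zero] at hftc
  rw [eq_div_iff (by positivity), ← hftc, ← intervalIntegral.integral_mul_const]
  refine intervalIntegral.integral_congr_ae ?_
  filter_upwards [hf.ae_hasDerivAt_integral] with x hx hxI
  rw [((hx (uIoc_subset_uIcc hxI) a left_mem_uIcc).fun_pow (k + 1)).deriv]
  push_cast
  ring

lemma Matrix.norm_mul_le_card_mul {l m n α : Type*} [Fintype l] [Fintype m] [Fintype n]
    [NonUnitalNormedRing α] (X : Matrix l m α) (Y : Matrix m n α) :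
    ‖X * Y‖ ≤ Fintype.card m * ‖X‖ * ‖Y‖ := by
  refine (Matrix.norm_le_iff (by positivity)).2 fun i j => ?_
  calc ‖(X * Y) i j‖ ≤ ∑ k, ‖X i k‖ * ‖Y k j‖ := by
        rw [Matrix.mul_apply]
        exact norm_sum_le_of_le _ fun k _ => norm_mul_le _ _
    _ ≤ ∑ _k : m, ‖X‖ * ‖Y‖ := by
        gcongr <;> exact Matrix.norm_entry_le_entrywise_sup_norm _
    _ = Fintype.card m * ‖X‖ * ‖Y‖ := by simp [mul_assoc]

lemma MeasureTheory.IntegrableOn.matrix_mul_continuousOn {ι : Type*} [Fintype ι]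
    {A g : ℝ → Matrix ι ι ℂ} {s : Set ℝ} (hs : IsCompact s)
    (hA : IntegrableOn A s) (hg : ContinuousOn g s) :
    IntegrableOn (fun t => A t * g t) s := by
  obtain ⟨M, hM⟩ := hs.exists_bound_of_continuousOn hg
  -- `Matrix` does not unfold to the pi type during instance search.
  have : TopologicalSpace.PseudoMetrizableSpace (Matrix ι ι ℂ) :=
    inferInstanceAs (TopologicalSpace.PseudoMetrizableSpace (ι → ι → ℂ))
  refine Integrable.mono' ((hA.norm.const_mul (Fintype.card ι)).mul_const M)
    (hA.aestronglyMeasurable.mul (hg.aestronglyMeasurable hs.measurableSet)) ?_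
  refine (ae_restrict_iff' hs.measurableSet).2 (Eventually.of_forall fun t ht => ?_)
  calc ‖A t * g t‖ ≤ Fintype.card ι * ‖A t‖ * ‖g t‖ := Matrix.norm_mul_le_card_mul _ _
    _ ≤ Fintype.card ι * ‖A t‖ * M := by gcongr; exact hM t ht

section Picard

variable {ι : Type*} [Fintype ι] [DecidableEq ι] {a b : ℝ} {A : ℝ → Matrix ι ι ℂ}

noncomputable def picard (a : ℝ) (A : ℝ → Matrix ι ι ℂ) : ℕ → ℝ → Matrix ι ι ℂ
  | 0 => fun _ => 1
  | k + 1 => fun t => -∫ s in a..t, A s * picard a A k s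

@[simp]
lemma picard_zero (a : ℝ) (A : ℝ → Matrix ι ι ℂ) (t : ℝ) : picard a A 0 t = 1 := rfl

lemma picard_succ (a : ℝ) (A : ℝ → Matrix ι ι ℂ) (k : ℕ) (t : ℝ) :
    picard a A (k + 1) t = -∫ s in a..t, A s * picard a A k s := rfl

lemma continuousOn_picard (hA : IntegrableOn A (Icc a b)) (k : ℕ) :
    ContinuousOn (picard a A k) (Icc a b) := by
  induction k with
  | zero => exact continuousOn_const
  | succ k ih =>
    exact (continuousOn_intervalIntegral_Icc (hA.matrix_mul_continuousOn isCompact_Icc ih)).neg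

lemma norm_picard_add_le (hA : IntegrableOn A (Icc a b)) {j : ℕ} {c : ℝ}
    (hc : ∀ t ∈ Icc a b, ‖picard a A j t‖ ≤ c) (k : ℕ) {t : ℝ} (ht : t ∈ Icc a b) :
    ‖picard a A (j + k) t‖ ≤ c * (Fintype.card ι * ∫ s in a..t, ‖A s‖) ^ k / k ! := by
  induction k generalizing t with
  | zero => simpa using hc t ht
  | succ k ih =>
    set K : ℝ := (Fintype.card ι : ℝ)
    set μ : ℝ → ℝ := fun s => ∫ u in a..s, ‖A u‖
    have hAt : IntegrableOn A (Icc a t) := hA.mono_set (Icc_subset_Icc_right ht.2)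
    have hAt' : IntervalIntegrable (fun s => ‖A s‖) volume a t :=
      (intervalIntegrable_iff_integrableOn_Icc_of_le ht.1).2 hAt.norm
    have hμ : ContinuousOn μ (uIcc a t) := by
      rw [uIcc_of_le ht.1]; exact continuousOn_intervalIntegral_Icc hAt.norm
    have hP : IntegrableOn (fun s => A s * picard a A (j + k) s) (Icc a t) :=
      hAt.matrix_mul_continuousOn isCompact_Icc
        ((continuousOn_picard hA _).mono (Icc_subset_Icc_right ht.2))
    calc ‖picard a A (j + (k + 1)) t‖ = ‖∫ s in a..t, A s * picard a A (j + k) s‖ := by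
          rw [← add_assoc, picard_succ, norm_neg]
      _ ≤ ∫ s in a..t, ‖A s * picard a A (j + k) s‖ :=
          intervalIntegral.norm_integral_le_integral_norm ht.1
      _ ≤ ∫ s in a..t, c * K ^ (k + 1) / k ! * (‖A s‖ * μ s ^ k) := by
          refine intervalIntegral.integral_mono_on ht.1
            ((intervalIntegrable_iff_integrableOn_Icc_of_le ht.1).2 hP.norm)
            ((hAt'.mul_continuousOn (hμ.pow k)).const_mul _)
            fun s hs => ?_
          calc ‖A s * picard a A (j + k) s‖
              ≤ K * ‖A s‖ * ‖picard a A (j + k) s‖ := Matrix.norm_mul_le_card_mul _ _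
            _ ≤ K * ‖A s‖ * (c * (K * μ s) ^ k / k !) := by
                gcongr; exact ih ⟨hs.1, hs.2.trans ht.2⟩
            _ = c * K ^ (k + 1) / k ! * (‖A s‖ * μ s ^ k) := by ring
      _ = c * (K * μ t) ^ (k + 1) / (k + 1)! := by
          rw [intervalIntegral.integral_const_mul, integral_mul_primitive_pow hAt',
            Nat.factorial_succ]
          push_cast
          field_simp
          simp only [μ]
          ring

lemma norm_picard_add_le_of_integral_norm_le (hA : IntegrableOn A (Icc a b)) {j : ℕ} {c C : ℝ}
    (hc : ∀ t ∈ Icc a b, ‖picard a A j t‖ ≤ c) (hC : ∫ s in Icc a b, ‖A s‖ ≤ C) (k : ℕ) {t : ℝ}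
    (ht : t ∈ Icc a b) : ‖picard a A (j + k) t‖ ≤ c * (Fintype.card ι * C) ^ k / k ! := by
  refine (norm_picard_add_le hA hc k ht).trans ?_
  have hc0 : 0 ≤ c := (norm_nonneg _).trans (hc t ht)
  have hμ0 : 0 ≤ ∫ s in a..t, ‖A s‖ :=
    intervalIntegral.integral_nonneg ht.1 fun _ _ => norm_nonneg _
  gcongr
  exact (intervalIntegral_norm_le_setIntegral_Icc hA ht).trans hC

lemma norm_picard_le (hA : IntegrableOn A (Icc a b)) {C : ℝ} (hC : ∫ s in Icc a b, ‖A s‖ ≤ C)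
    (k : ℕ) {t : ℝ} (ht : t ∈ Icc a b) :
    ‖picard a A k t‖ ≤ ‖(1 : Matrix ι ι ℂ)‖ * (Fintype.card ι * C) ^ k / k ! := by
  simpa using norm_picard_add_le_of_integral_norm_le hA (j := 0) (fun _ _ => le_rfl) hC k ht

lemma norm_picard_succ_le (hA : IntegrableOn A (Icc a b)) {ε C : ℝ}
    (hε : ∀ t ∈ Icc a b, ‖∫ s in a..t, A s‖ ≤ ε) (hC : ∫ s in Icc a b, ‖A s‖ ≤ C)
    (k : ℕ) {t : ℝ} (ht : t ∈ Icc a b) :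
    ‖picard a A (k + 1) t‖ ≤ ε * (Fintype.card ι * C) ^ k / k ! := by
  rw [add_comm]
  refine norm_picard_add_le_of_integral_norm_le hA (fun t ht => ?_) hC k ht
  simpa [picard_succ] using hε t ht

lemma exists_summable_norm_picard_le (hA : IntegrableOn A (Icc a b)) :
    ∃ u : ℕ → ℝ, Summable u ∧ ∀ k, ∀ t ∈ Icc a b, ‖picard a A k t‖ ≤ u k :=
  ⟨_, (Real.summable_pow_div_factorial _).mul_left ‖(1 : Matrix ι ι ℂ)‖,
    fun k _ ht => (norm_picard_le hA le_rfl k ht).trans_eq (mul_div_assoc _ _ _)⟩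

noncomputable def picardSeries (a : ℝ) (A : ℝ → Matrix ι ι ℂ) (t : ℝ) : Matrix ι ι ℂ :=
  ∑' k, picard a A k t

lemma hasSum_picard (hA : IntegrableOn A (Icc a b)) {t : ℝ} (ht : t ∈ Icc a b) :
    HasSum (fun k => picard a A k t) (picardSeries a A t) := by
  obtain ⟨u, hu, hPu⟩ := exists_summable_norm_picard_le hA
  exact (Summable.of_norm_bounded hu fun k => hPu k t ht).hasSum

lemma continuousOn_picardSeries (hA : IntegrableOn A (Icc a b)) :
    ContinuousOn (picardSeries a A) (Icc a b) := by
  obtain ⟨u, hu, hPu⟩ := exists_summable_norm_picard_le hA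
  exact continuousOn_tsum (continuousOn_picard hA) hu hPu

lemma picardSeries_eq_one_sub_integral (hA : IntegrableOn A (Icc a b)) {t : ℝ}
    (ht : t ∈ Icc a b) : picardSeries a A t = 1 - ∫ s in a..t, A s * picardSeries a A s := by
  obtain ⟨u, hu, hPu⟩ := exists_summable_norm_picard_le hA
  have hIoc : Ι a t ⊆ Icc a b := by
    rw [uIoc_of_le ht.1]; exact Ioc_subset_Icc_self.trans (Icc_subset_Icc_right ht.2)
  have hint : HasSum (fun k => ∫ s in a..t, A s * picard a A k s)
      (∫ s in a..t, A s * picardSeries a A s) := by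
    refine intervalIntegral.hasSum_integral_of_dominated_convergence
      (fun k s => Fintype.card ι * ‖A s‖ * u k) (fun k => ?_) (fun k => ?_)
      (Eventually.of_forall fun _ _ => hu.mul_left _) ?_
      (Eventually.of_forall fun s hs => (hasSum_picard hA (hIoc hs)).mul_left (A s))
    · exact ((hA.matrix_mul_continuousOn isCompact_Icc (continuousOn_picard hA k)).mono_set
        hIoc).aestronglyMeasurable
    · refine Eventually.of_forall fun s hs => (Matrix.norm_mul_le_card_mul _ _).trans ?_
      gcongr
      exact hPu k s (hIoc hs)
    · simp_rw [tsum_mul_left]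
      exact (((intervalIntegrable_iff_integrableOn_Icc_of_le ht.1).2
        (hA.mono_set (Icc_subset_Icc_right ht.2)).norm).const_mul _).mul_const _
  have hsucc : HasSum (fun k => picard a A k t) (1 + -∫ s in a..t, A s * picardSeries a A s) :=
    HasSum.zero_add (f := fun k => picard a A k t) hint.neg
  rw [(hasSum_picard hA ht).unique hsucc, sub_eq_add_neg]

lemma norm_picardSeries_sub_one_le (hA : IntegrableOn A (Icc a b)) {ε C : ℝ}
    (hε : ∀ t ∈ Icc a b, ‖∫ s in a..t, A s‖ ≤ ε) (hC : ∫ s in Icc a b, ‖A s‖ ≤ C)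
    {t : ℝ} (ht : t ∈ Icc a b) :
    ‖picardSeries a A t - 1‖ ≤ ε * Real.exp (Fintype.card ι * C) := by
  have hshift : HasSum (fun k => picard a A (k + 1) t) (picardSeries a A t - 1) := by
    simpa using (hasSum_nat_add_iff' 1).2 (hasSum_picard hA ht)
  have hexp : HasSum (fun k : ℕ => ε * ((Fintype.card ι * C) ^ k / k !))
      (ε * Real.exp (Fintype.card ι * C)) := by
    rw [Real.exp_eq_exp_ℝ]
    exact (NormedSpace.expSeries_div_hasSum_exp _).mul_left ε
  exact hshift.norm_le_of_bounded hexp fun k =>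
    (norm_picard_succ_le hA hε hC k ht).trans_eq (mul_div_assoc _ _ _)

end Picard

theorem statement5_general (m : ℕ) (a b : ℝ)
    (R : ℕ → ℝ → Matrix (Fin m) (Fin m) ℂ)
    (hR : ∀ n, IntegrableOn (R n) (Set.Icc a b))
    -- ‖R^∨_{Aₙ}‖_∞ → 0
    (hI : Tendsto (fun n => supIcc a b (fun t => ∫ s in a..t, R n s)) atTop (𝓝 0))
    -- ‖R_{Aₙ}‖₁ = O(1)
    (hII : ∃ C : ℝ, ∀ n, (∫ t in Set.Icc a b, ‖R n t‖) ≤ C) :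
    MemMClass a b (Fin m) R := by
  obtain ⟨C, hC⟩ := hII
  have hbound : ∀ n, supIcc a b (fun t => picardSeries a (R n) t - 1)
      ≤ supIcc a b (fun t => ∫ s in a..t, R n s) * Real.exp (m * C) :=
    fun n => supIcc_le (mul_nonneg (supIcc_nonneg _ _ _) (Real.exp_pos _).le) fun t ht => by
      simpa using norm_picardSeries_sub_one_le (hR n)
        (fun t ht => norm_le_supIcc (continuousOn_intervalIntegral_Icc (hR n)) ht) (hC n) ht
  refine ⟨fun n => picardSeries a (R n), fun n => continuousOn_picardSeries (hR n),
    fun n => (hR n).matrix_mul_continuousOn isCompact_Icc (continuousOn_picardSeries (hR n)),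
    fun n t ht => picardSeries_eq_one_sub_integral (hR n) ht, ?_⟩
  refine squeeze_zero (fun n => supIcc_nonneg _ _ _) hbound ?_
  simpa using hI.mul_const (Real.exp (m * C))

/-- If `‖R^∨_{Aₙ}‖_∞ → 0` and `‖R_{Aₙ}‖₁ = O(1)`, then the sequence `R_{Aₙ}` belongs to
the class `𝓜ᵐ`. -/
theorem statement5 (m : ℕ) (a b : ℝ) (hab : a < b)
    (R : ℕ → ℝ → Matrix (Fin m) (Fin m) ℂ)
    (hR : ∀ n, IntegrableOn (R n) (Set.Icc a b))
    -- ‖R^∨_{Aₙ}‖_∞ → 0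
    (hI : Tendsto (fun n => supIcc a b (fun t => ∫ s in a..t, R n s)) atTop (𝓝 0))
    -- ‖R_{Aₙ}‖₁ = O(1)
    (hII : ∃ C : ℝ, ∀ n, (∫ t in Set.Icc a b, ‖R n t‖) ≤ C) :
    MemMClass a b (Fin m) R :=
  statement5_general m a b R hR hI hII
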